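/- arXiv:0805.2867 — 3 statements merged into one kernel-verified Lean document; each statement's English description precedes it below -/
import Mathlib

section
/- Let f : ℕ → ℝ be an additive function (f(mn) = f(m) + f(n) whenever gcd(m,n) = 1) such that there exist constants C > 0 and 0 < δ ≤ 1 with |f(p^v)| ≤ C/p^δ for all primes p and all v ≥ 1, and such that for every sufficiently small t > 0 there exists a prime p with t - t^{1+λ} ≤ f(p) ≤ t, where λ > 0. Then δ·λ < 1. -/
/-! If `δ * lam ≥ 1`, fix a small `T` and take about `T ^ (-lam) / 4` points of `[T/2, T]` spaced
`2 * T ^ (1 + lam)` apart. Condition (c) gives a prime at each of them, with distinct values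
`f p ≥ T / 4`, and condition (b) then forces `p ≤ (4C/T) ^ (1/δ) ≤ (4C) ^ (1/δ) * T ^ (-lam)`.
This yields a positive proportion of primes below `(4C) ^ (1/δ) * T ^ (-lam)`, which is
impossible for small `T` since `π(x) = o(x)`. -/

open Filter Topology Finset

theorem Nat.eventually_primeCounting_floor_le_mul {ε : ℝ} (hε : 0 < ε) :
    ∀ᶠ x : ℝ in atTop, (Nat.primeCounting ⌊x⌋₊ : ℝ) ≤ ε * x := by
  filter_upwards [Chebyshev.eventually_primeCounting_le one_pos,
    Real.tendsto_log_atTop.eventually_ge_atTop ((Real.log 4 + 1) / ε), eventually_ge_atTop 0]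
    with x hπ hlog hx
  have hlog0 : 0 < Real.log x := lt_of_lt_of_le (by positivity) hlog
  calc (Nat.primeCounting ⌊x⌋₊ : ℝ) ≤ (Real.log 4 + 1) * x / Real.log x := hπ
    _ ≤ ε * x := by
      rw [div_le_iff₀ hlog0, mul_right_comm]
      gcongr
      rwa [div_le_iff₀ hε, mul_comm] at hlog

theorem Nat.card_le_primeCounting_floor {s : Finset ℕ} {x : ℝ}
    (hs : ∀ p ∈ s, p.Prime ∧ (p : ℝ) ≤ x) : #s ≤ Nat.primeCounting ⌊x⌋₊ := by
  rw [← Nat.primesLE_card_eq_primeCounting]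
  refine card_le_card fun p hp => Nat.mem_primesLE.2 ⟨?_, (hs p hp).1⟩
  exact Nat.le_floor (hs p hp).2

theorem exists_card_eq_of_forall_exists_near {α : Type*} (g : α → ℝ) (P : α → Prop)
    {a h : ℝ} (hh : 0 < h) (N : ℕ)
    (hnear : ∀ t ∈ Set.Icc a (a + 2 * N * h), ∃ x, P x ∧ t - h ≤ g x ∧ g x ≤ t) :
    ∃ s : Finset α, #s = N ∧ ∀ x ∈ s, P x ∧ a - h ≤ g x := by
  classical
  -- The points `a + 2 * j * h` are `2h` apart, so the values of `g` chosen near them increase.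
  have hmem (j : Fin N) : a + 2 * j * h ∈ Set.Icc a (a + 2 * N * h) := by
    have : (j : ℝ) ≤ N := by exact_mod_cast j.is_lt.le
    constructor <;> nlinarith
  choose x hxP hxlo hxhi using fun j => hnear _ (hmem j)
  have hmono : StrictMono (g ∘ x) := fun i j hij => by
    have : (i : ℝ) + 1 ≤ j := by exact_mod_cast hij
    simp only [Function.comp_apply]
    nlinarith [hxhi i, hxlo j]
  refine ⟨univ.image x, ?_, ?_⟩
  · rw [card_image_of_injective _ hmono.injective.of_comp, card_univ, Fintype.card_fin]
  · simp only [mem_image, mem_univ, true_and, forall_exists_index, forall_apply_eq_imp_iff]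
    refine fun j => ⟨hxP j, le_trans ?_ (hxlo j)⟩
    have : (0 : ℝ) ≤ j := j.val.cast_nonneg
    nlinarith

theorem le_rpow_inv_of_le_div_rpow {x y C δ : ℝ} (hx : 0 < x) (hy : 0 < y) (hδ : 0 < δ)
    (h : y ≤ C / x ^ δ) : x ≤ (C / y) ^ δ⁻¹ := by
  have hxδ : 0 < x ^ δ := Real.rpow_pos_of_pos hx δ
  have hle : x ^ δ ≤ C / y := by
    rw [le_div_iff₀ hy, mul_comm]
    rwa [le_div_iff₀ hxδ] at h
  exact (Real.le_rpow_inv_iff_of_pos hx.le (hxδ.le.trans hle) hδ).2 hle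

theorem exists_primes_of_forall_exists_near (f : ℕ → ℝ) {lam T : ℝ} (hlam : 0 < lam)
    (hT0 : 0 < T) (hT4 : 4 ≤ T ^ (-lam))
    (hc : ∀ t : ℝ, 0 < t → t ≤ T → ∃ p : ℕ, p.Prime ∧ t - t ^ (1 + lam) ≤ f p ∧ f p ≤ t) :
    ∃ s : Finset ℕ, #s = ⌊T ^ (-lam) / 4⌋₊ ∧ ∀ p ∈ s, p.Prime ∧ T / 4 ≤ f p := by
  set N := ⌊T ^ (-lam) / 4⌋₊
  set h := T ^ (1 + lam)
  have hh : 0 < h := Real.rpow_pos_of_pos hT0 _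
  have hXh : T ^ (-lam) * h = T := by
    rw [← Real.rpow_add hT0, show -lam + (1 + lam) = 1 by ring, Real.rpow_one]
  have hN : 4 * N * h ≤ T := by
    rw [← hXh]
    gcongr
    linarith [Nat.floor_le (by positivity : 0 ≤ T ^ (-lam) / 4)]
  have hh4 : 4 * h ≤ T := by
    rw [← hXh]
    exact mul_le_mul_of_nonneg_right hT4 hh.le
  have hnear : ∀ t ∈ Set.Icc (T / 2) (T / 2 + 2 * N * h),
      ∃ p : ℕ, p.Prime ∧ t - h ≤ f p ∧ f p ≤ t := by
    rintro t ⟨ht₁, ht₂⟩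
    have ht0 : 0 < t := by linarith
    have htT : t ≤ T := by linarith
    obtain ⟨p, hp, hlo, hhi⟩ := hc t ht0 htT
    have : t ^ (1 + lam) ≤ h := Real.rpow_le_rpow ht0.le htT (by linarith)
    exact ⟨p, hp, by linarith, hhi⟩
  obtain ⟨s, hs, hsf⟩ := exists_card_eq_of_forall_exists_near f Nat.Prime hh N hnear
  exact ⟨s, hs, fun p hp => ⟨(hsf p hp).1, by linarith [(hsf p hp).2]⟩⟩

theorem cast_le_of_div_four_le_apply (f : ℕ → ℝ) {C δ lam T : ℝ} (hC : 0 < C) (hδ : 0 < δ)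
    (hδlam : 1 ≤ δ * lam) (hT0 : 0 < T) (hT1 : T ≤ 1)
    (hb : ∀ p : ℕ, p.Prime → f p ≤ C / (p : ℝ) ^ δ) {p : ℕ} (hp : p.Prime) (hfp : T / 4 ≤ f p) :
    (p : ℝ) ≤ (4 * C) ^ δ⁻¹ * T ^ (-lam) := by
  calc (p : ℝ) ≤ (C / (T / 4)) ^ δ⁻¹ :=
        le_rpow_inv_of_le_div_rpow (by exact_mod_cast hp.pos) (by positivity) hδ
          (hfp.trans (hb p hp))
    _ = (4 * C) ^ δ⁻¹ * T ^ (-δ⁻¹) := by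
        rw [div_div_eq_mul_div, mul_comm C, div_eq_mul_inv, Real.mul_rpow (by positivity)
          (by positivity), Real.inv_rpow hT0.le, Real.rpow_neg hT0.le]
    _ ≤ (4 * C) ^ δ⁻¹ * T ^ (-lam) := by
        refine mul_le_mul_of_nonneg_left (Real.rpow_le_rpow_of_exponent_ge hT0 hT1 ?_)
          (by positivity)
        rw [neg_le_neg_iff, inv_le_iff_one_le_mul₀ hδ]
        rwa [mul_comm]

theorem stmt_4_general (f : ℕ → ℝ)
    (C δ lam : ℝ) (hC : 0 < C) (hδ0 : 0 < δ) (hlam : 0 < lam)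
    (hb : ∀ p : ℕ, p.Prime → ∀ v : ℕ, 1 ≤ v → |f (p ^ v)| ≤ C / (p : ℝ) ^ δ)
    (hc : ∃ t₀ > 0, ∀ t : ℝ, 0 < t → t ≤ t₀ →
      ∃ p : ℕ, p.Prime ∧ t - t ^ (1 + lam) ≤ f p ∧ f p ≤ t) :
    δ * lam < 1 := by
  by_contra! hδlam
  obtain ⟨t₀, ht₀, hnear⟩ := hc
  have hb₁ (p : ℕ) (hp : p.Prime) : f p ≤ C / (p : ℝ) ^ δ :=
    (le_abs_self _).trans (by simpa using hb p hp 1 le_rfl)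
  set K := (4 * C) ^ δ⁻¹
  have hK : 0 < K := by positivity
  have hX : Tendsto (fun T : ℝ => T ^ (-lam)) (𝓝[>] 0) atTop :=
    tendsto_rpow_neg_nhdsGT_zero (neg_neg_of_pos hlam)
  have hπ := (hX.const_mul_atTop hK).eventually
    (Nat.eventually_primeCounting_floor_le_mul (ε := (8 * K)⁻¹) (by positivity))
  have hsmall : ∀ᶠ T in 𝓝[>] (0 : ℝ), T ∈ Set.Ioc 0 (min t₀ 1) :=
    eventually_mem_set.2 (Ioc_mem_nhdsGT (lt_min ht₀ one_pos))
  obtain ⟨T, ⟨hT0, hT⟩, hπT, hT8⟩ := (hsmall.and (hπ.and (hX.eventually_gt_atTop 8))).exists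
  obtain ⟨s, hs, hsf⟩ := exists_primes_of_forall_exists_near f hlam hT0 (by linarith)
    fun t ht htT => hnear t ht (htT.trans (hT.trans (min_le_left _ _)))
  have hcard : #s ≤ Nat.primeCounting ⌊K * T ^ (-lam)⌋₊ :=
    Nat.card_le_primeCounting_floor fun p hp => ⟨(hsf p hp).1,
      cast_le_of_div_four_le_apply f hC hδ0 hδlam hT0 (hT.trans (min_le_right _ _)) hb₁
        (hsf p hp).1 (hsf p hp).2⟩
  have hcount : T ^ (-lam) / 4 - 1 < T ^ (-lam) / 8 := calc
    T ^ (-lam) / 4 - 1 < ⌊T ^ (-lam) / 4⌋₊ := Nat.sub_one_lt_floor _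
    _ = #s := by rw [hs]
    _ ≤ Nat.primeCounting ⌊K * T ^ (-lam)⌋₊ := by exact_mod_cast hcard
    _ ≤ (8 * K)⁻¹ * (K * T ^ (-lam)) := hπT
    _ = T ^ (-lam) / 8 := by field_simp
  linarith

theorem stmt_4 (f : ℕ → ℝ)
    (hadd : ∀ m n : ℕ, 0 < m → 0 < n → Nat.Coprime m n → f (m * n) = f m + f n)
    (C δ lam : ℝ) (hC : 0 < C) (hδ0 : 0 < δ) (hδ1 : δ ≤ 1) (hlam : 0 < lam)
    (hb : ∀ p : ℕ, p.Prime → ∀ v : ℕ, 1 ≤ v → |f (p ^ v)| ≤ C / (p : ℝ) ^ δ)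
    (hc : ∃ t₀ > 0, ∀ t : ℝ, 0 < t → t ≤ t₀ →
      ∃ p : ℕ, p.Prime ∧ t - t ^ (1 + lam) ≤ f p ∧ f p ≤ t) :
    δ * lam < 1 :=
  stmt_4_general f C δ lam hC hδ0 hlam hb hc
end

section
/- Let 0 < ξ and 0 < τ_0 < 6^{-1/ξ}, and let (τ_j) satisfy τ_{j-1}^{1+ξ} ≤ τ_j < 3·τ_{j-1}^{1+ξ} for all j ≥ 1. Then the intervals [τ_j - 3τ_j^{1+ξ}, τ_j - τ_j^{1+ξ}] for j = 0, 1, 2, ... are pairwise disjoint. -/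
theorem stmt_11 (ξ : ℝ) (hξ : 0 < ξ) (τ : ℕ → ℝ)
    (hpos : ∀ j, 0 < τ j)
    (h0 : τ 0 < 6 ^ (-1 / ξ))
    (hrec : ∀ j : ℕ, τ j ^ (1 + ξ) ≤ τ (j + 1) ∧ τ (j + 1) < 3 * τ j ^ (1 + ξ)) :
    ∀ i j : ℕ, i ≠ j →
      Disjoint (Set.Icc (τ i - 3 * τ i ^ (1 + ξ)) (τ i - τ i ^ (1 + ξ)))
        (Set.Icc (τ j - 3 * τ j ^ (1 + ξ)) (τ j - τ j ^ (1 + ξ))) := by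
  have h6 : (0:ℝ) < 6 := by norm_num
  set c : ℝ := 6 ^ (-1 / ξ) with hc
  have hcpos : 0 < c := Real.rpow_pos_of_pos h6 _
  have hcξ : c ^ ξ = 1 / 6 := by
    rw [hc, ← Real.rpow_mul h6.le, div_mul_cancel₀ (-1 : ℝ) hξ.ne',
      Real.rpow_neg_one]
    norm_num
  have key : ∀ j, τ j < c → τ j ^ (1 + ξ) < τ j / 6 := by
    intro j hj
    have h1 : τ j ^ (1 + ξ) = τ j * τ j ^ ξ := by
      rw [Real.rpow_add (hpos j), Real.rpow_one]
    have h2 : τ j ^ ξ < c ^ ξ := Real.rpow_lt_rpow (hpos j).le hj hξ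
    rw [h1]
    calc τ j * τ j ^ ξ < τ j * (1 / 6) := by
          rw [← hcξ]; exact mul_lt_mul_of_pos_left h2 (hpos j)
      _ = τ j / 6 := by ring
  have hsmall : ∀ j, τ j < c := by
    intro j
    induction j with
    | zero => exact h0
    | succ n ih =>
      have h2 := (hrec n).2
      have hk := key n ih
      have hp := hpos n
      linarith
  have hdec : ∀ j, τ (j + 1) < τ j := by
    intro j
    have h2 := (hrec j).2
    have hk := key j (hsmall j)
    have hp := hpos j
    linarith
  have hanti : StrictAnti τ := strictAnti_nat_of_succ_lt hdec
  have sep : ∀ i j : ℕ, i < j →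
      τ j - τ j ^ (1 + ξ) < τ i - 3 * τ i ^ (1 + ξ) := by
    intro i j hij
    have h1 : τ j ≤ τ (i + 1) := hanti.antitone hij
    have h2 := (hrec i).2
    have hk := key i (hsmall i)
    have hp : 0 < τ j ^ (1 + ξ) := Real.rpow_pos_of_pos (hpos j) _
    linarith
  intro i j hij
  rcases lt_or_gt_of_ne hij with h | h
  · rw [Set.disjoint_left]
    intro x hx hx'
    have := sep i j h
    have h1 := hx.1
    have h2 := hx'.2
    linarith
  · rw [Set.disjoint_right]
    intro x hx hx'
    have := sep j i h
    have h1 := hx.1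
    have h2 := hx'.2
    linarith
end

section
/- For every real number γ > 0 and every ε with 0 < ε < γ, and for any finite set B of primes, there exists a squarefree positive integer n, composed only of primes outside B, such that γ − ε < log(n/φ(n)) < γ − ε/2. -/
/-!
For squarefree `n` the quantity `log (n / φ n)` is the sum of `f p = log (p / (p - 1))` over the
primes `p ∣ n`, and `1 / p ≤ f p ≤ 1 / (p - 1)`. Since `∑ 1 / p` diverges, the primes outside `B`
and above `2 / ε + 1` have unbounded partial sums of `f`, while each single term is below `ε / 2`.
In a set of such primes that is minimal under inclusion among those with sum `> γ - ε`, removing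
one element drops the sum to `≤ γ - ε` and removes less than `ε / 2`, so the sum is `< γ - ε / 2`;
take `n` to be its product.
-/

open Finset Real

lemma one_div_le_log_div_sub_one {x : ℝ} (hx : 1 < x) : 1 / x ≤ log (x / (x - 1)) := by
  have hsub : 0 < x - 1 := by linarith
  calc 1 / x = 1 - (x / (x - 1))⁻¹ := by field_simp; ring
    _ ≤ log (x / (x - 1)) := one_sub_inv_le_log_of_pos (div_pos (by linarith) hsub)

lemma log_div_sub_one_le_one_div {x : ℝ} (hx : 1 < x) : log (x / (x - 1)) ≤ 1 / (x - 1) := by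
  have hsub : 0 < x - 1 := by linarith
  calc log (x / (x - 1)) ≤ x / (x - 1) - 1 := log_le_sub_one_of_pos (div_pos (by linarith) hsub)
    _ = 1 / (x - 1) := by field_simp; ring

lemma exists_finset_sum_mem_Ioo {ι : Type*} [DecidableEq ι] {S : Set ι} {a : ι → ℝ} {L δ : ℝ}
    (hL : 0 ≤ L) (ha : ∀ i ∈ S, a i < δ) (hS : ∃ T : Finset ι, ↑T ⊆ S ∧ L < ∑ i ∈ T, a i) :
    ∃ T : Finset ι, ↑T ⊆ S ∧ L < ∑ i ∈ T, a i ∧ ∑ i ∈ T, a i < L + δ := by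
  obtain ⟨T, hmin⟩ := exists_minimal_of_wellFoundedLT _ hS
  obtain ⟨hTS, hTL⟩ := hmin.prop
  obtain ⟨q, hq⟩ : T.Nonempty := nonempty_iff_ne_empty.2 <| by
    rintro rfl
    rw [sum_empty] at hTL
    linarith
  have herase : ∑ i ∈ T.erase q, a i ≤ L := by
    by_contra! h
    exact hmin.not_prop_of_lt (erase_ssubset hq) ⟨(coe_subset.2 (erase_subset q T)).trans hTS, h⟩
  refine ⟨T, hTS, hTL, ?_⟩
  rw [← add_sum_erase T a hq]
  linarith [ha q (hTS hq)]

lemma exists_primes_notMem_lt_sum_one_div (F : Finset ℕ) (L : ℝ) :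
    ∃ T : Finset ℕ, (∀ p ∈ T, p.Prime ∧ p ∉ F) ∧ L < ∑ p ∈ T, (1 : ℝ) / p := by
  set g := Set.indicator {p : ℕ | p.Prime ∧ p ∉ F} (fun n : ℕ => (1 : ℝ) / n)
  have hg : ¬ Summable g := fun h => not_summable_one_div_on_primes <| h.congr_cofinite <| by
    refine Filter.eventually_cofinite.2 (F.finite_toSet.subset fun n hn => ?_)
    by_contra hnF
    exact hn (by simp [g, Set.indicator, show n ∉ F from hnF])
  obtain ⟨U, hU⟩ : ∃ U : Finset ℕ, L < ∑ n ∈ U, g n := by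
    by_contra! h
    exact hg (summable_of_sum_le (fun n => Set.indicator_nonneg (fun n _ => by positivity) n) h)
  refine ⟨U.filter (fun p => p.Prime ∧ p ∉ F), fun p hp => (mem_filter.1 hp).2, ?_⟩
  rw [sum_filter]
  simpa only [g, Set.indicator_apply, Set.mem_ofPred_eq] using hU

namespace Nat

lemma squarefree_prod_primes {T : Finset ℕ} (hT : ∀ p ∈ T, p.Prime) :
    Squarefree (∏ p ∈ T, p) :=
  squarefree_prod_of_pairwise_isCoprime
    (fun p hp q hq hpq => coprime_iff_isRelPrime.1 ((coprime_primes (hT p hp) (hT q hq)).2 hpq))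
    fun p hp => (hT p hp).prime.squarefree

lemma totient_prod_primes {T : Finset ℕ} (hT : ∀ p ∈ T, p.Prime) :
    φ (∏ p ∈ T, p) = ∏ p ∈ T, (p - 1) := by
  have h := totient_mul_prod_primeFactors (∏ p ∈ T, p)
  rw [primeFactors_prod hT, mul_comm (∏ p ∈ T, p)] at h
  exact Nat.eq_of_mul_eq_mul_right (prod_pos fun p hp => (hT p hp).pos) h

end Nat

lemma log_prod_primes_div_totient {T : Finset ℕ} (hT : ∀ p ∈ T, p.Prime) :
    log ((∏ p ∈ T, p : ℕ) / (Nat.totient (∏ p ∈ T, p) : ℝ)) = ∑ p ∈ T, log (p / (p - 1)) := by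
  have hφ : (Nat.totient (∏ p ∈ T, p) : ℝ) = ∏ p ∈ T, ((p : ℝ) - 1) := by
    rw [Nat.totient_prod_primes hT, Nat.cast_prod]
    exact prod_congr rfl fun p hp => by rw [Nat.cast_sub (hT p hp).one_le, Nat.cast_one]
  rw [hφ, Nat.cast_prod, ← prod_div_distrib, log_prod]
  intro p hp
  have : (1 : ℝ) < p := by exact_mod_cast (hT p hp).one_lt
  exact (div_pos (by linarith) (by linarith)).ne'

theorem stmt_18_general (γ ε : ℝ) (hε0 : 0 < ε) (hε1 : ε < γ)
    (B : Finset ℕ) :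
    ∃ n : ℕ, 0 < n ∧ Squarefree n ∧ (∀ p ∈ n.primeFactors, p ∉ B) ∧
      γ - ε < Real.log ((n : ℝ) / (Nat.totient n : ℝ)) ∧
      Real.log ((n : ℝ) / (Nat.totient n : ℝ)) < γ - ε / 2 := by
  set F := B ∪ range (⌈2 / ε⌉₊ + 2)
  have hsmall : ∀ p ∈ {p : ℕ | p.Prime ∧ p ∉ F}, log (p / (p - 1)) < ε / 2 := by
    rintro p ⟨hp, hpF⟩
    have hpN : ((⌈2 / ε⌉₊ + 2 : ℕ) : ℝ) ≤ p := by
      exact_mod_cast not_lt.1 fun h => hpF (mem_union_right _ (mem_range.2 h))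
    have hp1 : 2 / ε < (p : ℝ) - 1 := by push_cast at hpN; linarith [Nat.le_ceil (2 / ε)]
    have hp1_pos : 0 < (p : ℝ) - 1 := (by positivity : 0 < 2 / ε).trans hp1
    calc log (p / (p - 1)) ≤ 1 / ((p : ℝ) - 1) :=
          log_div_sub_one_le_one_div (by exact_mod_cast hp.one_lt)
      _ < ε / 2 := by
          rw [div_lt_iff₀ hε0] at hp1
          rw [div_lt_div_iff₀ hp1_pos two_pos]
          linarith
  obtain ⟨T₀, hT₀, hsum₀⟩ := exists_primes_notMem_lt_sum_one_div F (γ - ε)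
  obtain ⟨T, hTS, hlow, hup⟩ := exists_finset_sum_mem_Ioo (sub_nonneg.2 hε1.le) hsmall
    ⟨T₀, hT₀, hsum₀.trans_le <| sum_le_sum fun p hp =>
      one_div_le_log_div_sub_one (by exact_mod_cast (hT₀ p hp).1.one_lt)⟩
  have hT : ∀ p ∈ T, p.Prime := fun p hp => (hTS hp).1
  refine ⟨∏ p ∈ T, p, prod_pos fun p hp => (hT p hp).pos, Nat.squarefree_prod_primes hT,
    ?_, ?_, ?_⟩
  · rw [Nat.primeFactors_prod hT]
    exact fun p hp hpB => (hTS hp).2 (mem_union_left _ hpB)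
  · rwa [log_prod_primes_div_totient hT]
  · rw [log_prod_primes_div_totient hT]
    linarith

theorem stmt_18 (γ ε : ℝ) (hγ : 0 < γ) (hε0 : 0 < ε) (hε1 : ε < γ)
    (B : Finset ℕ) :
    ∃ n : ℕ, 0 < n ∧ Squarefree n ∧ (∀ p ∈ n.primeFactors, p ∉ B) ∧
      γ - ε < Real.log ((n : ℝ) / (Nat.totient n : ℝ)) ∧
      Real.log ((n : ℝ) / (Nat.totient n : ℝ)) < γ - ε / 2 :=
  stmt_18_general γ ε hε0 hε1 B
end
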